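/- arXiv:1801.05864 — 3 statements merged into one kernel-verified Lean document; each statement's English description precedes it below -/
import Mathlib

section
/- Let $f(\theta)=\sum_{j=0}^k a_j\cos^j(\theta)\sin^{k-j}(\theta)$ with real coefficients $a_j$. If $|f(\theta)|\leq C$ for all real $\theta$, then $|a_j|\leq 2^{k+1}C$ for every $0\leq j\leq k$. -/
/-!
Put `z = e^{iθ}`. Since `cos θ = (z + z⁻¹) / 2` and `sin θ = (z - z⁻¹) / (2i)`, we have
`z^k f(θ) = Q(z²)` for a polynomial `Q = fourierPoly k a` of degree `≤ k`; its coefficients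
`q_m` are the Fourier coefficients of `f`. Sampling `Q` at the `(k+1)`-st roots of unity and
inverting the discrete Fourier transform gives `|q_m| ≤ C`. Conversely `a_j = ∑ₘ q_m S_{m,j}`,
where `S_{m,j}` is the coefficient of `cos^j θ sin^{k-j} θ` in
`(cos θ + i sin θ)^m (cos θ - i sin θ)^{k-m}`. Cauchy–Schwarz with the weights `choose k m`,
the orthogonality relation `∑ₘ choose k m |S_{m,j}|² = 2^k choose k j` and
`∑ₘ 1 / choose k m ≤ 3` give `∑ₘ |S_{m,j}| ≤ 2^{k+1}`.
-/

open Real Finset Polynomial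

def binaryForm {R : Type*} [CommSemiring R] (k : ℕ) (b : ℕ → R) (x y : R) : R :=
  ∑ l ∈ range (k + 1), b l * x ^ l * y ^ (k - l)

section BinaryForm

variable {R S : Type*} [CommSemiring R] [CommSemiring S] (k : ℕ) (b : ℕ → R)

theorem binaryForm_mul_mul (t x y : R) :
    binaryForm k b (t * x) (t * y) = t ^ k * binaryForm k b x y := by
  rw [binaryForm, binaryForm, mul_sum]
  refine sum_congr rfl fun l hl => ?_
  rw [← pow_mul_pow_sub t (Nat.le_of_lt_succ (mem_range.mp hl))]
  ring

theorem map_binaryForm (f : R →+* S) (x y : R) :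
    f (binaryForm k b x y) = binaryForm k (f ∘ b) (f x) (f y) := by
  simp [binaryForm]

theorem natDegree_binaryForm_C_le (c : ℕ → R) {x y : R[X]} (hx : x.natDegree ≤ 1)
    (hy : y.natDegree ≤ 1) : (binaryForm k (C ∘ c) x y).natDegree ≤ k := by
  refine natDegree_sum_le_of_forall_le _ _ fun l hl => ?_
  have hl : l ≤ k := Nat.le_of_lt_succ (mem_range.mp hl)
  calc (C (c l) * x ^ l * y ^ (k - l)).natDegree
      ≤ (C (c l) * x ^ l).natDegree + (y ^ (k - l)).natDegree := natDegree_mul_le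
    _ ≤ l * 1 + (k - l) * 1 := by
        gcongr
        · exact natDegree_C_mul_le _ _ |>.trans <| natDegree_pow_le_of_le l hx
        · exact natDegree_pow_le_of_le _ hy
    _ = k := by omega

theorem binaryForm_coeff_eq_eval_mul {K : Type*} [Field K] {Q : K[X]} (hQ : Q.natDegree ≤ k)
    (x : K) {y : K} (hy : y ≠ 0) : binaryForm k Q.coeff x y = Q.eval (x / y) * y ^ k := by
  rw [binaryForm, eval_eq_sum_range' (Nat.lt_succ_of_le hQ), sum_mul]
  refine sum_congr rfl fun l hl => ?_
  rw [div_pow, pow_sub₀ y hy (Nat.le_of_lt_succ (mem_range.mp hl))]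
  field_simp

end BinaryForm

noncomputable def fourierPoly (k : ℕ) (b : ℕ → ℂ) : ℂ[X] :=
  binaryForm k (C ∘ b) (C (1 / 2) * (X + 1)) (C (1 / (2 * Complex.I)) * (X - 1))

section FourierPoly

variable (k : ℕ) (b : ℕ → ℂ)

theorem eval_fourierPoly (w : ℂ) :
    (fourierPoly k b).eval w = binaryForm k b ((w + 1) / 2) ((w - 1) / (2 * Complex.I)) := by
  rw [fourierPoly, ← coe_evalRingHom, map_binaryForm]
  simp only [coe_evalRingHom, Function.comp_def, eval_C, eval_mul, eval_add, eval_sub, eval_X,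
    eval_one]
  congr 1 <;> ring

theorem natDegree_fourierPoly_le : (fourierPoly k b).natDegree ≤ k :=
  natDegree_binaryForm_C_le k b (by compute_degree) (by compute_degree)

theorem binaryForm_coeff_fourierPoly (u : ℂ) {v : ℂ} (hv : v ≠ 0) :
    binaryForm k (fourierPoly k b).coeff u v
      = binaryForm k b ((u + v) / 2) ((u - v) / (2 * Complex.I)) := by
  rw [binaryForm_coeff_eq_eval_mul k (natDegree_fourierPoly_le k b) u hv, eval_fourierPoly,
    mul_comm, ← binaryForm_mul_mul]
  congr 1 <;> field_simp

theorem eval_fourierPoly_exp_sq (θ : ℂ) :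
    (fourierPoly k b).eval (Complex.exp (θ * Complex.I) ^ 2)
      = Complex.exp (θ * Complex.I) ^ k * binaryForm k b (Complex.cos θ) (Complex.sin θ) := by
  rw [eval_fourierPoly, ← binaryForm_mul_mul, ← Complex.cos_add_sin_I]
  have h := Complex.sin_sq_add_cos_sq θ
  congr 1
  · linear_combination -h / 2 + Complex.sin θ ^ 2 / 2 * Complex.I_sq
  · rw [div_eq_iff (by simp)]
    linear_combination h - Complex.sin θ ^ 2 * Complex.I_sq

theorem binaryForm_C_X_one_eq :
    binaryForm k (C ∘ b) X 1
      = binaryForm k (C ∘ (fourierPoly k b).coeff) (X + C Complex.I) (X - C Complex.I) := by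
  refine eq_of_infinite_eval_eq _ _ ((Set.finite_singleton Complex.I).infinite_compl.mono ?_)
  intro x hx
  simp only [Set.mem_compl_iff, Set.mem_singleton_iff] at hx
  simp only [Set.mem_ofPred_eq, ← coe_evalRingHom, map_binaryForm]
  simp only [coe_evalRingHom, Function.comp_def, eval_C, eval_add, eval_sub, eval_X, eval_one]
  rw [binaryForm_coeff_fourierPoly k b _ (sub_ne_zero.mpr hx)]
  congr 1
  · ring
  · field_simp
    ring

end FourierPoly

-- `S_{m,j}`, dehomogenized at `sin θ = 1`.
noncomputable def cisCoeff (k m j : ℕ) : ℂ :=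
  ((X + C Complex.I) ^ m * (X - C Complex.I) ^ (k - m)).coeff j

theorem eq_sum_coeff_fourierPoly_mul_cisCoeff (k : ℕ) (b : ℕ → ℂ) {j : ℕ} (hj : j ≤ k) :
    b j = ∑ m ∈ range (k + 1), (fourierPoly k b).coeff m * cisCoeff k m j := by
  have h := congrArg (coeff · j) (binaryForm_C_X_one_eq k b)
  simpa [binaryForm, cisCoeff, finsetSum_coeff, mul_assoc, coeff_X_pow, Nat.lt_succ_of_le hj]
    using h

theorem starRingEnd_cisCoeff (k m j : ℕ) :
    starRingEnd ℂ (cisCoeff k m j)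
      = ((X - C Complex.I) ^ m * (X + C Complex.I) ^ (k - m)).coeff j := by
  rw [cisCoeff, ← coeff_map]
  simp [Polynomial.map_mul, Polynomial.map_pow, sub_eq_add_neg]

theorem coeff_coeff_C_mul_map_C {R : Type*} [CommSemiring R] (p q : R[X]) (i j : ℕ) :
    ((C p * q.map C).coeff j).coeff i = p.coeff i * q.coeff j := by
  rw [coeff_C_mul, coeff_map, coeff_mul_C]

theorem coeff_coeff_C_X_mul_X_add_one_pow (R : Type*) [CommSemiring R] (k j : ℕ) :
    ((((C X * X + 1 : R[X][X]) ^ k).coeff j).coeff j) = k.choose j := by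
  have h : (C X * X + 1 : R[X][X]) ^ k = ((X + 1) ^ k).comp (C X * X) := by
    simp [add_comp, pow_comp]
  rw [h, comp_C_mul_X_coeff, coeff_X_add_one_pow, coeff_natCast_mul, coeff_X_pow_self, mul_one]

/-- Up to unimodular factors the `cisCoeff k m j` are the Krawtchouk numbers `K_j(m)`, and this
is their orthogonality relation: compare the coefficients of `x^j y^j` in
`∑ₘ choose k m (x+i)^m (x-i)^{k-m} (y-i)^m (y+i)^{k-m} = (2xy + 2)^k`. -/
theorem sum_norm_cisCoeff_sq_mul_choose (k j : ℕ) :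
    ∑ m ∈ range (k + 1), ‖cisCoeff k m j‖ ^ 2 * k.choose m = 2 ^ k * k.choose j := by
  have hi : (C (C Complex.I) : ℂ[X][X]) ^ 2 = -1 := by simp [← C_pow]
  have h2 : (C (C 2) : ℂ[X][X]) = 2 := rfl
  have key : ((C X + C (C Complex.I)) * (X - C (C Complex.I))
      + (C X - C (C Complex.I)) * (X + C (C Complex.I))) ^ k
      = C (C (2 ^ k)) * (C X * X + 1) ^ k := by
    rw [show (C X + C (C Complex.I)) * (X - C (C Complex.I))
        + (C X - C (C Complex.I)) * (X + C (C Complex.I)) = C (C 2) * (C X * X + 1) by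
      linear_combination (-2 : ℂ[X][X]) * hi - (C X * X + 1) * h2, mul_pow, ← C_pow, ← C_pow]
  rw [add_pow] at key
  have h := congrArg (fun p : ℂ[X][X] => (p.coeff j).coeff j) key
  simp only [finsetSum_coeff, coeff_C_mul, coeff_coeff_C_X_mul_X_add_one_pow] at h
  apply Complex.ofReal_injective
  push_cast
  rw [← h]
  refine sum_congr rfl fun m _ => ?_
  symm
  rw [mul_pow, mul_pow, mul_mul_mul_comm, coeff_mul_natCast, coeff_mul_natCast,
    show (C X + C (C Complex.I)) ^ m * (C X - C (C Complex.I)) ^ (k - m)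
      = C ((X + C Complex.I) ^ m * (X - C Complex.I) ^ (k - m)) by simp,
    show (X - C (C Complex.I)) ^ m * (X + C (C Complex.I)) ^ (k - m)
      = ((X - C Complex.I) ^ m * (X + C Complex.I) ^ (k - m)).map C by simp,
    coeff_coeff_C_mul_map_C, ← cisCoeff, ← starRingEnd_cisCoeff, Complex.mul_conj,
    Complex.normSq_eq_norm_sq]
  push_cast
  ring

theorem Nat.le_choose_of_pos_of_lt : ∀ {k m : ℕ}, 0 < m → m < k → k ≤ k.choose m
  | n + 1, m' + 1, _, hm => by
    rw [Nat.choose_succ_succ']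
    rcases Nat.lt_or_ge (m' + 1) n with hlt | hge
    · have := Nat.le_choose_of_pos_of_lt (m := m' + 1) m'.succ_pos hlt
      have := Nat.choose_pos (n := n) (k := m') (by omega)
      omega
    · obtain rfl : n = m' + 1 := by omega
      simp

theorem sum_inv_choose_le_three (k : ℕ) :
    ∑ m ∈ range (k + 1), ((k.choose m : ℝ))⁻¹ ≤ 3 := by
  rcases k with _ | K
  · norm_num
  have hmid : ∑ i ∈ range K, (((K + 1).choose (i + 1) : ℝ))⁻¹ ≤ 1 := by
    calc ∑ i ∈ range K, (((K + 1).choose (i + 1) : ℝ))⁻¹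
        ≤ ∑ _i ∈ range K, ((K + 1 : ℕ) : ℝ)⁻¹ := by
          refine sum_le_sum fun i hi => inv_anti₀ (by positivity) ?_
          exact_mod_cast Nat.le_choose_of_pos_of_lt i.succ_pos (by simp at hi; omega)
      _ = K / (K + 1) := by simp [div_eq_mul_inv]
      _ ≤ 1 := (div_le_one (by positivity)).mpr (by linarith)
  rw [sum_range_succ', sum_range_succ]
  simp only [Nat.choose_self, Nat.choose_zero_right, Nat.cast_one, inv_one]
  linarith

theorem sum_norm_cisCoeff_le (k j : ℕ) :
    ∑ m ∈ range (k + 1), ‖cisCoeff k m j‖ ≤ 2 ^ (k + 1) := by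
  have hchoose : ∀ m ∈ range (k + 1), (0 : ℝ) < k.choose m := fun m hm =>
    Nat.cast_pos.mpr (Nat.choose_pos (Nat.le_of_lt_succ (mem_range.mp hm)))
  have cauchySchwarz := sum_sq_le_sum_mul_sum_of_sq_le_mul (range (k + 1))
    (r := fun m => ‖cisCoeff k m j‖) (f := fun m => ‖cisCoeff k m j‖ ^ 2 * k.choose m)
    (g := fun m => ((k.choose m : ℝ))⁻¹) (fun m hm => by have := hchoose m hm; positivity)
    (fun m hm => by have := hchoose m hm; positivity)
    (fun m hm => by rw [mul_assoc, mul_inv_cancel₀ (hchoose m hm).ne', mul_one])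
  rw [sum_norm_cisCoeff_sq_mul_choose] at cauchySchwarz
  have hj : (k.choose j : ℝ) ≤ 2 ^ k := by exact_mod_cast Nat.choose_le_two_pow k j
  refine (pow_le_pow_iff_left₀ (sum_nonneg fun _ _ => norm_nonneg _) (by positivity)
    two_ne_zero).mp ?_
  calc (∑ m ∈ range (k + 1), ‖cisCoeff k m j‖) ^ 2
      ≤ 2 ^ k * k.choose j * ∑ m ∈ range (k + 1), ((k.choose m : ℝ))⁻¹ := cauchySchwarz
    _ ≤ 2 ^ k * 2 ^ k * 3 := by gcongr; exact sum_inv_choose_le_three k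
    _ ≤ (2 ^ (k + 1)) ^ 2 := by
        rw [pow_succ (2 : ℝ) k]
        nlinarith [pow_pos (two_pos (α := ℝ)) k]

theorem IsPrimitiveRoot.sum_pow_div_pow_pow {K : Type*} [Field K] {ζ : K} {N n m : ℕ}
    (hζ : IsPrimitiveRoot ζ N) (hn : n < N) (hm : m < N) :
    ∑ r ∈ range N, (ζ ^ n / ζ ^ m) ^ r = if n = m then (N : K) else 0 := by
  have hζ0 : ζ ≠ 0 := hζ.ne_zero (by omega)
  split_ifs with hnm
  · simp [hnm, pow_ne_zero m hζ0]
  · have hne : ζ ^ n / ζ ^ m ≠ 1 := div_ne_one_of_ne fun h => hnm (hζ.pow_inj hn hm h)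
    rw [geom_sum_eq hne, div_pow, ← pow_mul, ← pow_mul, mul_comm n, mul_comm m, pow_mul,
      pow_mul, hζ.pow_eq_one, one_pow, one_pow, div_one, sub_self, zero_div]

theorem Polynomial.norm_coeff_le_of_norm_eval_pow_le {Q : ℂ[X]} {N : ℕ} {ζ : ℂ}
    (hζ : IsPrimitiveRoot ζ N) (hQ : Q.natDegree < N) {C : ℝ}
    (hC : ∀ r < N, ‖Q.eval (ζ ^ r)‖ ≤ C) {m : ℕ} (hm : m < N) : ‖Q.coeff m‖ ≤ C := by
  have hnorm : ‖ζ‖ = 1 := hζ.norm'_eq_one (by omega)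
  have inversion : N * Q.coeff m = ∑ r ∈ range N, Q.eval (ζ ^ r) / (ζ ^ m) ^ r := by
    calc (N : ℂ) * Q.coeff m
        = ∑ n ∈ range N, Q.coeff n * ∑ r ∈ range N, (ζ ^ n / ζ ^ m) ^ r := by
          rw [sum_congr rfl fun n hn => by rw [hζ.sum_pow_div_pow_pow (mem_range.mp hn) hm]]
          simp [hm, mul_comm]
      _ = ∑ r ∈ range N, Q.eval (ζ ^ r) / (ζ ^ m) ^ r := by
          simp_rw [eval_eq_sum_range' hQ, sum_div, mul_sum]
          rw [sum_comm]
          refine sum_congr rfl fun r _ => sum_congr rfl fun n _ => ?_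
          rw [div_pow, ← pow_mul, ← pow_mul, ← pow_mul, mul_comm n r, mul_div_assoc]
  have hbound : N * ‖Q.coeff m‖ ≤ N * C := by
    calc (N : ℝ) * ‖Q.coeff m‖ = ‖∑ r ∈ range N, Q.eval (ζ ^ r) / (ζ ^ m) ^ r‖ := by
          rw [← inversion, norm_mul, Complex.norm_natCast]
      _ ≤ ∑ r ∈ range N, ‖Q.eval (ζ ^ r) / (ζ ^ m) ^ r‖ := norm_sum_le _ _
      _ ≤ ∑ r ∈ range N, C := sum_le_sum fun r hr => by
          rw [norm_div, norm_pow, norm_pow, hnorm, one_pow, one_pow, div_one]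
          exact hC r (mem_range.mp hr)
      _ = N * C := by simp
  exact le_of_mul_le_mul_left hbound (by exact_mod_cast (by omega : 0 < N))

theorem norm_eval_fourierPoly_exp_sq (k : ℕ) (a : ℕ → ℝ) (θ : ℝ) :
    ‖(fourierPoly k (fun l => (a l : ℂ))).eval (Complex.exp (θ * Complex.I) ^ 2)‖
      = |binaryForm k a (Real.cos θ) (Real.sin θ)| := by
  rw [eval_fourierPoly_exp_sq, norm_mul, norm_pow, Complex.norm_exp_ofReal_mul_I, one_pow,
    one_mul, ← Complex.ofReal_cos, ← Complex.ofReal_sin, ← Real.norm_eq_abs,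
    ← Complex.norm_real]
  exact congrArg norm (map_binaryForm k a Complex.ofRealHom _ _).symm

theorem stmt_0 (k : ℕ) (a : ℕ → ℝ) (C : ℝ) (hC : 0 ≤ C)
    (h : ∀ θ : ℝ, |∑ j ∈ Finset.range (k + 1),
      a j * Real.cos θ ^ j * Real.sin θ ^ (k - j)| ≤ C) :
    ∀ j ≤ k, |a j| ≤ 2 ^ (k + 1) * C := by
  intro j hj
  set Q := fourierPoly k (fun l => (a l : ℂ))
  set ζ := Complex.exp (2 * π * Complex.I / (k + 1 : ℕ))
  have hsample : ∀ r < k + 1, ‖Q.eval (ζ ^ r)‖ ≤ C := fun r _ => by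
    have hζr : ζ ^ r = Complex.exp ((π * r / (k + 1) : ℝ) * Complex.I) ^ 2 := by
      rw [← Complex.exp_nat_mul, ← Complex.exp_nat_mul]
      push_cast
      field_simp
    rw [hζr, norm_eval_fourierPoly_exp_sq]
    exact h _
  have hcoeff : ∀ m < k + 1, ‖Q.coeff m‖ ≤ C := fun m hm =>
    norm_coeff_le_of_norm_eval_pow_le (Complex.isPrimitiveRoot_exp _ k.succ_ne_zero)
      (Nat.lt_succ_of_le (natDegree_fourierPoly_le _ _)) hsample hm
  calc |a j| = ‖∑ m ∈ range (k + 1), Q.coeff m * cisCoeff k m j‖ := by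
        rw [← eq_sum_coeff_fourierPoly_mul_cisCoeff k _ hj, Complex.norm_real, Real.norm_eq_abs]
    _ ≤ ∑ m ∈ range (k + 1), C * ‖cisCoeff k m j‖ := norm_sum_le_of_le _ fun m hm => by
        rw [norm_mul]
        exact mul_le_mul_of_nonneg_right (hcoeff m (mem_range.mp hm)) (norm_nonneg _)
    _ ≤ C * 2 ^ (k + 1) := by
        rw [← mul_sum]
        exact mul_le_mul_of_nonneg_left (sum_norm_cisCoeff_le k j) hC
    _ = 2 ^ (k + 1) * C := mul_comm _ _
end

section
/- Let $g\in\mathbb{R}[x]$ be a nonzero univariate polynomial with complex roots $\alpha_1,\dots,\alpha_d$ (with multiplicity), let $x\in\mathbb{R}$ with $g(x)\neq 0$, and let $n\geq 0$. Then $\left|\frac{g^{(n)}(x)}{g(x)}\right|\leq\left(\sum_{i=1}^d\frac{1}{|x-\alpha_i|}\right)^n$. -/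
open Polynomial

/-!
Over `ℂ` the polynomial factors as `c * ∏ (X - αᵢ)`. Peeling off one linear factor,
`((X - α) q)⁽ⁿ⁾ = (X - α) q⁽ⁿ⁾ + n q⁽ⁿ⁻¹⁾`, so by induction on the number of factors
`|p⁽ⁿ⁾(z)| ≤ |p(z)| Sⁿ` with `S = ∑ 1 / |z - αᵢ|`; the inductive step closes with the first two
terms of the binomial expansion, `sⁿ⁺¹ + (n + 1) t sⁿ ≤ (s + t)ⁿ⁺¹`, at `t = 1 / |z - α|`.
-/
theorem pow_succ_add_mul_pow_le_add_pow {R : Type*} [CommSemiring R] [PartialOrder R]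
    [IsOrderedRing R] {s t : R} (hs : 0 ≤ s) (ht : 0 ≤ t) (n : ℕ) :
    s ^ (n + 1) + (n + 1) * t * s ^ n ≤ (s + t) ^ (n + 1) := by
  rw [add_pow, Finset.sum_range_succ, Finset.sum_range_succ, Nat.choose_succ_self_right,
    Nat.choose_self, Nat.sub_self, Nat.add_sub_cancel_left, add_assoc]
  calc s ^ (n + 1) + (n + 1) * t * s ^ n
      = s ^ n * t ^ 1 * ((n + 1 : ℕ) : R) + s ^ (n + 1) * t ^ 0 * ((1 : ℕ) : R) := by
        push_cast; ring
    _ ≤ _ := le_add_of_nonneg_left (by positivity)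

theorem Polynomial.iterate_derivative_X_sub_C_mul {R : Type*} [CommRing R] (a : R) (p : R[X])
    (n : ℕ) : derivative^[n] ((X - C a) * p) =
      (X - C a) * derivative^[n] p + n • derivative^[n - 1] p := by
  rw [sub_mul, iterate_derivative_sub, mul_comm X, iterate_derivative_mul_X,
    iterate_derivative_C_mul]
  ring

theorem Polynomial.norm_eval_iterate_derivative_prod_X_sub_C_le {𝕜 : Type*} [NormedField 𝕜]
    (M : Multiset 𝕜) {z : 𝕜} (hz : ∀ α ∈ M, α ≠ z) (n : ℕ) :
    ‖(derivative^[n] (M.map (X - C ·)).prod).eval z‖ ≤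
      ‖((M.map (X - C ·)).prod).eval z‖ * ((M.map fun α => 1 / ‖z - α‖).sum) ^ n := by
  induction M using Multiset.induction_on generalizing n with
  | empty => cases n <;> simp [iterate_derivative_one]
  | cons a M ih =>
    obtain ⟨ha, hM⟩ := Multiset.forall_mem_cons.mp hz
    set q := (M.map (X - C ·)).prod
    set S := (M.map fun α => 1 / ‖z - α‖).sum
    have hr : 0 < ‖z - a‖ := norm_pos_iff.mpr (sub_ne_zero.mpr ha.symm)
    have hS : 0 ≤ S := Multiset.sum_nonneg fun _ h => by
      obtain ⟨_, _, rfl⟩ := Multiset.mem_map.mp h; positivity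
    simp only [Multiset.map_cons, Multiset.prod_cons, Multiset.sum_cons, eval_mul, norm_mul,
      eval_sub, eval_X, eval_C]
    cases n with
    | zero => simp
    | succ n =>
      rw [iterate_derivative_X_sub_C_mul, Nat.add_sub_cancel]
      calc ‖eval z ((X - C a) * derivative^[n + 1] q + (n + 1) • derivative^[n] q)‖
          ≤ ‖z - a‖ * (‖q.eval z‖ * S ^ (n + 1)) + (n + 1) * (‖q.eval z‖ * S ^ n) := by
            rw [eval_add, eval_mul, eval_smul, eval_sub, eval_X, eval_C, nsmul_eq_mul]
            refine (norm_add_le _ _).trans ?_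
            rw [norm_mul, norm_mul]
            gcongr
            · exact ih hM (n + 1)
            · simpa using Nat.norm_cast_le (α := 𝕜) (n + 1)
            · exact ih hM n
        _ = ‖z - a‖ * ‖q.eval z‖ * (S ^ (n + 1) + (n + 1) * (1 / ‖z - a‖) * S ^ n) := by
            field_simp
        _ ≤ ‖z - a‖ * ‖q.eval z‖ * (1 / ‖z - a‖ + S) ^ (n + 1) := by
            rw [add_comm (1 / _)]
            gcongr
            exact pow_succ_add_mul_pow_le_add_pow hS (by positivity) n

theorem Polynomial.Splits.norm_eval_iterate_derivative_le {𝕜 : Type*} [NormedField 𝕜]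
    {p : 𝕜[X]} (hp : p.Splits) {z : 𝕜} (hz : p.eval z ≠ 0) (n : ℕ) :
    ‖(derivative^[n] p).eval z‖ ≤
      ‖p.eval z‖ * ((p.roots.map fun α => 1 / ‖z - α‖).sum) ^ n := by
  have hroots : ∀ α ∈ p.roots, α ≠ z := fun α hα h => hz (h ▸ isRoot_of_mem_roots hα)
  set M := p.roots -- so that `rw [hp.eq_prod_roots]` leaves `p.roots` alone
  rw [hp.eq_prod_roots, iterate_derivative_C_mul, eval_mul, eval_mul, norm_mul, norm_mul,
    mul_assoc]
  gcongr
  exact norm_eval_iterate_derivative_prod_X_sub_C_le M hroots n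

theorem stmt_5_general (g : Polynomial ℝ) (x : ℝ) (hx : g.eval x ≠ 0) (n : ℕ) :
    |(Polynomial.derivative^[n] g).eval x / g.eval x| ≤
      (((g.map (algebraMap ℝ ℂ)).roots.map
        (fun α => 1 / ‖(x : ℂ) - α‖)).sum) ^ n := by
  have heval (h : ℝ[X]) : (h.map (algebraMap ℝ ℂ)).eval (x : ℂ) = h.eval x := by
    rw [eval_map]; exact eval₂_at_apply (algebraMap ℝ ℂ) x
  have hbound := (IsAlgClosed.splits (g.map (algebraMap ℝ ℂ))).norm_eval_iterate_derivative_le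
    (z := x) (by rw [heval]; exact_mod_cast hx) n
  rw [iterate_derivative_map, heval, heval, Complex.norm_real, Complex.norm_real,
    Real.norm_eq_abs, Real.norm_eq_abs] at hbound
  rw [abs_div, div_le_iff₀ (abs_pos.mpr hx), mul_comm]
  exact hbound

theorem stmt_5 (g : Polynomial ℝ) (hg : g ≠ 0) (x : ℝ) (hx : g.eval x ≠ 0) (n : ℕ) :
    |(Polynomial.derivative^[n] g).eval x / g.eval x| ≤
      (((g.map (algebraMap ℝ ℂ)).roots.map
        (fun α => 1 / ‖(x : ℂ) - α‖)).sum) ^ n :=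
  stmt_5_general g x hx n
end

section
/- Let $P(x)=x^d-2(ax-1)^2$ and $P_2(x)=x^d-(ax-1)^2$ for an integer $d\geq 3$ and sufficiently large positive integer $a$. Then the product $P(x)P_2(x)$ has at least three real roots in the interval $(a^{-1}-h,a^{-1}+h)$ where $h=a^{-d/2-1}$. -/
open Real

theorem stmt_19 (d : ℕ) (hd : 3 ≤ d) :
    ∃ a₀ : ℕ, ∀ a : ℕ, a₀ ≤ a →
      ∃ x₁ x₂ x₃ : ℝ, x₁ < x₂ ∧ x₂ < x₃ ∧
        ∀ x ∈ ({x₁, x₂, x₃} : Set ℝ),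
          (x ^ d - 2 * ((a : ℝ) * x - 1) ^ 2) * (x ^ d - ((a : ℝ) * x - 1) ^ 2) = 0 ∧
          |x - (a : ℝ)⁻¹| < (a : ℝ) ^ (-(d : ℝ) / 2 - 1) := by
  refine ⟨2 * d, fun a ha => ?_⟩
  set A : ℝ := (a : ℝ) with hAdef
  have hdA : (2 * d : ℝ) ≤ A := by
    have : ((2 * d : ℕ) : ℝ) ≤ (a : ℝ) := Nat.cast_le.mpr ha
    push_cast at this; linarith
  have hd6 : (6 : ℝ) ≤ 2 * (d : ℝ) := by
    have : (3 : ℝ) ≤ (d : ℝ) := by exact_mod_cast hd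
    linarith
  have hA1 : (1 : ℝ) < A := by linarith
  have hA0 : (0 : ℝ) < A := by linarith
  set h : ℝ := A ^ (-(d : ℝ) / 2 - 1) with hhdef
  set t : ℝ := A ^ (-(d : ℝ) / 2) with htdef
  have hhpos : 0 < h := rpow_pos_of_pos hA0 _
  have htpos : 0 < t := rpow_pos_of_pos hA0 _
  have hAh : A * h = t := by
    rw [hhdef, htdef]
    nth_rewrite 1 [← Real.rpow_one A]
    rw [← Real.rpow_add hA0]; ring_nf
  have htt : t * t = (A⁻¹) ^ d := by
    rw [htdef, ← Real.rpow_add hA0]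
    rw [show -(d : ℝ) / 2 + -(d : ℝ) / 2 = -(d : ℝ) by ring]
    rw [Real.rpow_neg hA0.le, Real.rpow_natCast, inv_pow]
  -- h < A⁻¹
  have hh_lt : h < A⁻¹ := by
    have : h < A ^ (-1 : ℝ) := by
      rw [hhdef]
      apply Real.rpow_lt_rpow_left_iff hA1 |>.mpr
      have : (0 : ℝ) < (d : ℝ) := by positivity
      linarith
    rwa [Real.rpow_neg_one] at this
  -- t ≤ 1/(2d)
  have ht_small : t ≤ 1 / (2 * d) := by
    have h1 : t ≤ A ^ (-1 : ℝ) := by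
      rw [htdef]
      apply Real.rpow_le_rpow_left_iff hA1 |>.mpr
      have : (3 : ℝ) ≤ (d : ℝ) := by exact_mod_cast hd
      linarith
    rw [Real.rpow_neg_one] at h1
    have h2 : A⁻¹ ≤ 1 / (2 * d) := by
      rw [one_div]
      apply inv_anti₀ (by linarith) hdA
    linarith
  -- (1+t)^d < 2
  have hpow2 : (1 + t) ^ d < 2 := by
    have h1 : (1 + t) ^ d ≤ Real.exp t ^ d := by
      apply pow_le_pow_left₀ (by linarith) _ d
      linarith [Real.add_one_le_exp t]
    have h2 : Real.exp t ^ d = Real.exp ((d : ℝ) * t) := by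
      rw [← Real.exp_nat_mul]
    have h3 : (d : ℝ) * t ≤ 1 / 2 := by
      have hd0 : (0 : ℝ) < (d : ℝ) := by positivity
      have := mul_le_mul_of_nonneg_left ht_small hd0.le
      calc (d : ℝ) * t ≤ (d : ℝ) * (1 / (2 * d)) := this
        _ = 1 / 2 := by field_simp
    have h4 : Real.exp ((d : ℝ) * t) < 2 := by
      calc Real.exp ((d : ℝ) * t) ≤ Real.exp (1 / 2) := Real.exp_le_exp.mpr h3
        _ < Real.exp (Real.log 2) := by
            apply Real.exp_lt_exp.mpr
            have := Real.log_two_gt_d9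
            linarith
        _ = 2 := Real.exp_log (by norm_num)
    calc (1 + t) ^ d ≤ Real.exp t ^ d := h1
      _ = Real.exp ((d : ℝ) * t) := h2
      _ < 2 := h4
  set F : ℝ → ℝ := fun x => x ^ d - 2 * (A * x - 1) ^ 2 with hFdef
  set G : ℝ → ℝ := fun x => x ^ d - (A * x - 1) ^ 2 with hGdef
  have hFcont : Continuous F := by fun_prop
  have hGcont : Continuous G := by fun_prop
  set l : ℝ := A⁻¹ - h with hldef
  set r : ℝ := A⁻¹ + h with hrdef
  have hl_pos : 0 < l := by rw [hldef]; linarith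
  have hl_lt : l < A⁻¹ := by rw [hldef]; linarith
  have hr_gt : A⁻¹ < r := by rw [hrdef]; linarith
  have hinv_pos : 0 < A⁻¹ := inv_pos.mpr hA0
  have hinvd_pos : 0 < (A⁻¹) ^ d := pow_pos hinv_pos d
  -- values at endpoints
  have hAl : A * l - 1 = -t := by
    rw [hldef]; rw [mul_sub, mul_inv_cancel₀ hA0.ne', hAh]; ring
  have hAr : A * r - 1 = t := by
    rw [hrdef]; rw [mul_add, mul_inv_cancel₀ hA0.ne', hAh]; ring
  have hld : l ^ d < (A⁻¹) ^ d := pow_lt_pow_left₀ hl_lt hl_pos.le (by omega)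
  have hFl : F l < 0 := by
    simp only [hFdef]
    rw [hAl]
    have : (-t) ^ 2 = (A⁻¹) ^ d := by rw [neg_pow]; simp [sq, htt]
    rw [this]; linarith
  have hGl : G l < 0 := by
    simp only [hGdef]
    rw [hAl]
    have : (-t) ^ 2 = (A⁻¹) ^ d := by rw [neg_pow]; simp [sq, htt]
    rw [this]; linarith
  have hFmid : 0 < F A⁻¹ := by
    simp only [hFdef]
    rw [mul_inv_cancel₀ hA0.ne']
    simpa using hinvd_pos
  have hFr : F r < 0 := by
    simp only [hFdef]
    rw [hAr]
    have ht2 : t ^ 2 = (A⁻¹) ^ d := by rw [sq, htt]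
    have hr_eq : r = A⁻¹ * (1 + t) := by
      rw [hrdef]
      have : A⁻¹ * t = h := by
        rw [← hAh]; field_simp
      rw [mul_add, mul_one, this]
    have hrd : r ^ d < 2 * (A⁻¹) ^ d := by
      rw [hr_eq, mul_pow]
      calc (A⁻¹) ^ d * (1 + t) ^ d < (A⁻¹) ^ d * 2 :=
            (mul_lt_mul_iff_right₀ hinvd_pos).mpr hpow2
        _ = 2 * (A⁻¹) ^ d := by ring
    rw [ht2]; linarith
  -- root x₂ of F in (l, A⁻¹)
  obtain ⟨x₂, hx₂mem, hx₂⟩ := intermediate_value_Ioo hl_lt.le hFcont.continuousOn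
    (show (0:ℝ) ∈ Set.Ioo (F l) (F A⁻¹) from ⟨hFl, hFmid⟩)
  -- root x₃ of F in (A⁻¹, r)
  obtain ⟨x₃, hx₃mem, hx₃⟩ := intermediate_value_Ioo' hr_gt.le hFcont.continuousOn
    (show (0:ℝ) ∈ Set.Ioo (F r) (F A⁻¹) from ⟨hFr, hFmid⟩)
  -- G x₂ > 0
  have hx₂pos : 0 < x₂ := lt_trans hl_pos hx₂mem.1
  have hGx₂ : 0 < G x₂ := by
    have hF0 : x₂ ^ d - 2 * (A * x₂ - 1) ^ 2 = 0 := hx₂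
    have : (A * x₂ - 1) ^ 2 = x₂ ^ d / 2 := by linarith
    simp only [hGdef]
    rw [this]
    have : 0 < x₂ ^ d := pow_pos hx₂pos d
    linarith
  -- root x₁ of G in (l, x₂)
  obtain ⟨x₁, hx₁mem, hx₁⟩ := intermediate_value_Ioo hx₂mem.1.le hGcont.continuousOn
    (show (0:ℝ) ∈ Set.Ioo (G l) (G x₂) from ⟨hGl, hGx₂⟩)
  refine ⟨x₁, x₂, x₃, hx₁mem.2, lt_trans hx₂mem.2 hx₃mem.1, ?_⟩
  intro x hx
  have habs : ∀ y : ℝ, l < y → y < r → |y - A⁻¹| < h := by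
    intro y h1 h2
    rw [abs_sub_lt_iff]
    constructor <;> [rw [hrdef] at h2; rw [hldef] at h1] <;> linarith
  have hx₁r : x₁ < r := lt_trans (lt_trans hx₁mem.2 hx₂mem.2) (lt_trans hx₃mem.1 hx₃mem.2)
  have hx₂l : l < x₂ := hx₂mem.1
  have hx₂r : x₂ < r := lt_trans hx₂mem.2 (lt_trans hx₃mem.1 hx₃mem.2)
  have hx₃l : l < x₃ := lt_trans hx₂l (lt_trans hx₂mem.2 hx₃mem.1)
  simp only [Set.mem_insert_iff, Set.mem_singleton_iff] at hx
  rcases hx with rfl | rfl | rfl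
  · exact ⟨by rw [show (x ^ d - 2 * (A * x - 1) ^ 2) = F x from rfl,
        show (x ^ d - (A * x - 1) ^ 2) = G x from rfl, hx₁, mul_zero],
      habs _ hx₁mem.1 hx₁r⟩
  · exact ⟨by rw [show (x ^ d - 2 * (A * x - 1) ^ 2) = F x from rfl, hx₂, zero_mul],
      habs _ hx₂l hx₂r⟩
  · exact ⟨by rw [show (x ^ d - 2 * (A * x - 1) ^ 2) = F x from rfl, hx₃, zero_mul],
      habs _ hx₃l hx₃mem.2⟩
end
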